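/- arXiv:2012.03017 — 4 statements merged into one kernel-verified Lean document; each statement's English description precedes it below -/
import Mathlib

section
/- Let a_1 ≥ a_2 ≥ ⋯ ≥ a_{2W} be real numbers with a_{2W+1−j} = −a_j for 1 ≤ j ≤ W, and suppose that for every 1 ≤ j ≤ W we have ∑_{i=1}^j a_i ≤ ∑_{i=1}^j γ_i + 2εW, where γ_1 ≥ ⋯ ≥ γ_W > 0 and ε > 0. Then for any γ > 0, ∑_{j=1}^{W+1} (γ − a_j)_+ ≥ 2γ + ((W−1)γ − ∑_{j=1}^{W−1} γ_j)_+ − 2εW. -/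
/-! The last two indices of the range, `W` and `W + 1`, are paired by the symmetry
`a (W + 1) = - a W`, and `(γ - x)_+ + (γ + x)_+ ≥ 2γ`. For the first `W - 1` indices,
`∑ (γ - a j)_+ ≥ ((W - 1)γ - ∑ a j)_+`, and the hypothesis on partial sums at `j = W - 1`
replaces `∑ a j` by `∑ g j` at the cost of `2εW`. -/

open Finset

section PositivePart

variable {α : Type*}

theorem two_mul_le_max_sub_add_max_add [Ring α] [LinearOrder α] [IsOrderedAddMonoid α] (c x : α) :
    2 * c ≤ max (c - x) 0 + max (c + x) 0 :=
  calc 2 * c = (c - x) + (c + x) := by rw [two_mul]; abel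
    _ ≤ _ := add_le_add (le_max_left _ _) (le_max_left _ _)

variable [AddCommGroup α] [LinearOrder α] [IsOrderedAddMonoid α]

theorem max_card_nsmul_sub_sum_le_sum_max {ι : Type*} (s : Finset ι) (c : α) (a : ι → α) :
    max (#s • c - ∑ j ∈ s, a j) 0 ≤ ∑ j ∈ s, max (c - a j) 0 := by
  refine max_le ?_ (sum_nonneg fun j _ => le_max_right _ _)
  rw [← sum_const, ← sum_sub_distrib]
  exact sum_le_sum fun j _ => le_max_left _ _

theorem max_sub_le_max_of_sub_le {x y δ : α} (hδ : 0 ≤ δ) (h : x - δ ≤ y) :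
    max x 0 - δ ≤ max y 0 :=
  sub_le_iff_le_add.2 <| max_le ((sub_le_iff_le_add.1 h).trans (add_le_add_left (le_max_left _ _) _))
    (add_nonneg (le_max_right _ _) hδ)

end PositivePart

theorem stmt1_general (W : ℕ) (hW : 1 ≤ W) (a g : ℕ → ℝ) (ε γ : ℝ) (hε : 0 < ε)
    (hsym : ∀ j, 1 ≤ j → j ≤ W → a (2 * W + 1 - j) = - a j)
    (hsum : ∀ j, 1 ≤ j → j ≤ W →
      ∑ i ∈ Finset.Icc 1 j, a i ≤ (∑ i ∈ Finset.Icc 1 j, g i) + 2 * ε * W) :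
    ∑ j ∈ Finset.Icc 1 (W + 1), max (γ - a j) 0 ≥
      2 * γ + max (((W : ℝ) - 1) * γ - ∑ j ∈ Finset.Icc 1 (W - 1), g j) 0 - 2 * ε * W := by
  obtain ⟨n, rfl⟩ : ∃ n, W = n + 1 := ⟨W - 1, by omega⟩
  have hmid : a (n + 2) = -a (n + 1) := by
    simpa [show 2 * (n + 1) + 1 - (n + 1) = n + 2 by omega] using hsym (n + 1) (by omega) le_rfl
  have hhead : ∑ i ∈ Icc 1 n, a i ≤ ∑ i ∈ Icc 1 n, g i + 2 * ε * ((n + 1 : ℕ) : ℝ) := by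
    rcases n.eq_zero_or_pos with rfl | hn
    · simp only [Icc_eq_empty_of_lt zero_lt_one, sum_empty, zero_add]
      positivity
    · exact hsum n hn (by omega)
  have hpair := two_mul_le_max_sub_add_max_add γ (a (n + 1))
  have hfirst := max_card_nsmul_sub_sum_le_sum_max (Icc 1 n) γ a
  rw [Nat.card_Icc, Nat.add_sub_cancel, nsmul_eq_mul] at hfirst
  have hshift := max_sub_le_max_of_sub_le (x := (n : ℝ) * γ - ∑ i ∈ Icc 1 n, g i)
    (y := (n : ℝ) * γ - ∑ i ∈ Icc 1 n, a i)
    (by positivity : (0 : ℝ) ≤ 2 * ε * ((n + 1 : ℕ) : ℝ)) (by linarith)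
  rw [sum_Icc_succ_top (by omega), sum_Icc_succ_top (by omega), hmid, sub_neg_eq_add, Nat.add_sub_cancel]
  push_cast at hshift ⊢
  rw [add_sub_cancel_right]
  linarith

/-- if `a 1 ≥ … ≥ a (2W)` with the symplectic symmetry `a (2W+1-j) = - a j`,
and partial sums of `a` are bounded by partial sums of the Lyapunov exponents `g` plus `2εW`,
then `∑_{j=1}^{W+1} (γ - a j)_+ ≥ 2γ + ((W-1)γ - ∑_{j=1}^{W-1} g j)_+ - 2εW`. -/
theorem stmt1 (W : ℕ) (hW : 1 ≤ W) (a g : ℕ → ℝ) (ε γ : ℝ) (hε : 0 < ε) (hγ : 0 < γ)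
    (ha : ∀ i j, 1 ≤ i → i ≤ j → j ≤ 2 * W → a j ≤ a i)
    (hsym : ∀ j, 1 ≤ j → j ≤ W → a (2 * W + 1 - j) = - a j)
    (hg : ∀ i j, 1 ≤ i → i ≤ j → j ≤ W → g j ≤ g i)
    (hgpos : 0 < g W)
    (hsum : ∀ j, 1 ≤ j → j ≤ W →
      ∑ i ∈ Finset.Icc 1 j, a i ≤ (∑ i ∈ Finset.Icc 1 j, g i) + 2 * ε * W) :
    ∑ j ∈ Finset.Icc 1 (W + 1), max (γ - a j) 0 ≥
      2 * γ + max (((W : ℝ) - 1) * γ - ∑ j ∈ Finset.Icc 1 (W - 1), g j) 0 - 2 * ε * W :=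
  stmt1_general W hW a g ε γ hε hsym hsum
end

section
/- Let A be a random subset of [0,1] (on some probability space) and A⁺ ⊇ A a random measurable superset. Suppose there exist η ∈ (0,1] and p ≥ 0 such that: (a) for each λ ∈ [0,1], P{λ ∈ A⁺} ≤ p; (b) almost surely, if λ ∈ A and |λ′ − λ| < η with λ′ ∈ [0,1], then λ′ ∈ A⁺. Then P{A ≠ ∅} ≤ p/η. -/
/-! If `A(ω)` is nonempty, the propagation estimate puts an interval of length `η` of `[0,1]`
inside `A⁺(ω)`, so `η · P{A ≠ ∅} ≤ E |A⁺ ∩ [0,1]|` by Chebyshev. By Fubini the right-hand side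
is `∫₀¹ P{λ ∈ A⁺} dλ ≤ p`. -/

open MeasureTheory Set
open scoped ENNReal

theorem ofReal_le_volume_Icc_inter_ball {a b c r : ℝ} (ha : a ∈ Icc b c) (hr : r ≤ c - b) :
    ENNReal.ofReal r ≤ volume (Icc b c ∩ Metric.ball a r) := by
  obtain ⟨hba, hac⟩ := ha
  by_cases hright : a + r ≤ c
  · calc ENNReal.ofReal r = volume (Ico a (a + r)) := by rw [Real.volume_Ico, add_sub_cancel_left]
      _ ≤ _ := by
        refine measure_mono fun x ⟨hax, hxr⟩ ↦ ⟨⟨hba.trans hax, by linarith⟩, ?_⟩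
        rw [Real.ball_eq_Ioo]
        constructor <;> linarith
  · calc ENNReal.ofReal r = volume (Ioc (c - r) c) := by rw [Real.volume_Ioc, sub_sub_cancel]
      _ ≤ _ := by
        refine measure_mono fun x ⟨hrx, hxc⟩ ↦ ⟨⟨by linarith, hxc⟩, ?_⟩
        rw [Real.ball_eq_Ioo]
        constructor <;> linarith

theorem lintegral_measure_prodMk_right_le {α β : Type*} [MeasurableSpace α] [MeasurableSpace β]
    {μ : Measure α} {ν : Measure β} [SFinite μ] [SFinite ν] {s : Set (α × β)}
    (hs : MeasurableSet s) {c : ℝ≥0∞} (h : ∀ᵐ x ∂μ, ν (Prod.mk x ⁻¹' s) ≤ c) :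
    ∫⁻ y, μ ((fun x ↦ (x, y)) ⁻¹' s) ∂ν ≤ c * μ univ := by
  rw [← Measure.prod_apply_symm hs, Measure.prod_apply hs, ← lintegral_const]
  exact lintegral_mono_ae h

theorem mul_measure_le_lintegral_of_ae_le {Ω : Type*} [MeasurableSpace Ω] {P : Measure Ω}
    {f : Ω → ℝ≥0∞} (hf : AEMeasurable f P) {E : Set Ω} {c : ℝ≥0∞}
    (h : ∀ᵐ ω ∂P, ω ∈ E → c ≤ f ω) : c * P E ≤ ∫⁻ ω, f ω ∂P :=
  (mul_le_mul_right (measure_mono_ae h) c).trans (mul_meas_ge_le_lintegral₀ hf c)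

theorem stmt5_general {Ω : Type*} [MeasurableSpace Ω] (P : Measure Ω) [IsProbabilityMeasure P]
    (A Aplus : Ω → Set ℝ) (η p : ℝ) (hη : 0 < η) (hη1 : η ≤ 1)
    (hA01 : ∀ ω, A ω ⊆ Set.Icc 0 1)
    (hmeas : MeasurableSet {q : ℝ × Ω | q.1 ∈ Aplus q.2})
    (hsingle : ∀ lam ∈ Set.Icc (0 : ℝ) 1, P {ω | lam ∈ Aplus ω} ≤ ENNReal.ofReal p)
    (hprop : ∀ᵐ ω ∂P, ∀ lam ∈ A ω, ∀ lam' ∈ Set.Icc (0 : ℝ) 1,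
      |lam' - lam| < η → lam' ∈ Aplus ω) :
    P {ω | (A ω).Nonempty} ≤ ENNReal.ofReal (p / η) := by
  set ν := volume.restrict (Icc (0 : ℝ) 1)
  have hmean : ∫⁻ ω, ν (Aplus ω) ∂P ≤ ENNReal.ofReal p := by
    have hν : ∀ᵐ lam ∂ν, P {ω | lam ∈ Aplus ω} ≤ ENNReal.ofReal p :=
      (ae_restrict_iff' measurableSet_Icc).2 (.of_forall hsingle)
    simpa [ν] using lintegral_measure_prodMk_right_le hmeas hν
  have hlarge : ∀ᵐ ω ∂P, ω ∈ {ω | (A ω).Nonempty} → ENNReal.ofReal η ≤ ν (Aplus ω) := by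
    filter_upwards [hprop] with ω hω ⟨a, ha⟩
    rw [Measure.restrict_apply' measurableSet_Icc, inter_comm]
    refine (ofReal_le_volume_Icc_inter_ball (hA01 ω ha) (by linarith)).trans (measure_mono ?_)
    exact fun x ⟨hx, hxa⟩ ↦ ⟨hx, hω a ha x hx hxa⟩
  have hbound := (mul_measure_le_lintegral_of_ae_le
    (measurable_measure_prodMk_right hmeas).aemeasurable hlarge).trans hmean
  rw [ENNReal.ofReal_div_of_pos hη, ENNReal.le_div_iff_mul_le (.inl (by simpa using hη))
    (.inl ENNReal.ofReal_ne_top), mul_comm]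
  exact hbound

/-- Kakutani-type argument: if `A ⊆ A⁺` are random subsets of `[0,1]`,
`P{λ ∈ A⁺} ≤ p` for each `λ ∈ [0,1]` (single-energy bound), and almost surely every
`λ' ∈ [0,1]` with `|λ' − λ| < η` for some `λ ∈ A` belongs to `A⁺` (propagation estimate),
then `P{A ≠ ∅} ≤ p/η`. -/
theorem stmt5 {Ω : Type*} [MeasurableSpace Ω] (P : Measure Ω) [IsProbabilityMeasure P]
    (A Aplus : Ω → Set ℝ) (η p : ℝ) (hη : 0 < η) (hη1 : η ≤ 1) (hp : 0 ≤ p)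
    (hsub : ∀ ω, A ω ⊆ Aplus ω)
    (hA01 : ∀ ω, A ω ⊆ Set.Icc 0 1)
    (hmeas : MeasurableSet {q : ℝ × Ω | q.1 ∈ Aplus q.2})
    (hne : MeasurableSet {ω | (A ω).Nonempty})
    (hsingle : ∀ lam ∈ Set.Icc (0 : ℝ) 1, P {ω | lam ∈ Aplus ω} ≤ ENNReal.ofReal p)
    (hprop : ∀ᵐ ω ∂P, ∀ lam ∈ A ω, ∀ lam' ∈ Set.Icc (0 : ℝ) 1,
      |lam' - lam| < η → lam' ∈ Aplus ω) :
    P {ω | (A ω).Nonempty} ≤ ENNReal.ofReal (p / η) :=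
  stmt5_general P A Aplus η p hη hη1 hA01 hmeas hsingle hprop
end

section
/- Let D = diag(e^{a_1}, …, e^{a_ℓ}) with a_1 ≥ ⋯ ≥ a_ℓ, let u ∈ S(ℝ^ℓ) be a fixed unit vector, and let U be a random matrix in SO(ℓ) such that Uu is uniformly distributed on the unit sphere. Then for any a with a_1 ≥ a ≥ a_ℓ, P{‖DUu‖_∞ ≤ e^a} ≤ C_ℓ · exp(−∑_{j=1}^ℓ (a_j − a)_+), where C_ℓ depends only on ℓ. -/
/-!
The surface measure of a measurable `s ⊆ S^{ℓ-1}` is `ℓ` times the volume of the cone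
`(0, 1) • s`. On the event, a point `x` of the sphere satisfies `|x_j| ≤ 1` and
`|x_j| ≤ e^{a - a_j}`, i.e. `|x_j| ≤ e^{-(a_j - a)_+}`, so the cone lies in a box of volume
`∏_j 2 e^{-(a_j - a)_+} = 2^ℓ e^{-∑_j (a_j - a)_+}`.
-/

open MeasureTheory Metric

theorem Real.abs_le_exp_neg_max_sub {t b c : ℝ} (h₁ : |t| ≤ 1)
    (h₂ : |Real.exp b * t| ≤ Real.exp c) : |t| ≤ Real.exp (-max (b - c) 0) := by
  rw [abs_mul, abs_of_pos (Real.exp_pos b), ← le_div_iff₀' (Real.exp_pos b),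
    ← Real.exp_sub] at h₂
  rcases le_total b c with h | h
  · simpa [max_eq_right (sub_nonpos.2 h)] using h₁
  · simpa [max_eq_left (sub_nonneg.2 h)] using h₂

theorem Finset.sum_Icc_one_eq_sum_fin {M : Type*} [AddCommMonoid M] (f : ℕ → M) (n : ℕ) :
    ∑ j ∈ Finset.Icc 1 n, f j = ∑ j : Fin n, f (j + 1) := by
  rw [Fin.sum_univ_eq_sum_range (fun j => f (j + 1)), Finset.range_eq_Ico, Finset.sum_Ico_add']
  rfl

theorem ENNReal.prod_ofReal_two_mul_exp_neg (f : ℕ → ℝ) (n : ℕ) :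
    ∏ j : Fin n, ENNReal.ofReal (2 * Real.exp (-f (j + 1)))
      = 2 ^ n * ENNReal.ofReal (Real.exp (-∑ j ∈ Finset.Icc 1 n, f j)) := by
  rw [Finset.sum_Icc_one_eq_sum_fin, ← Finset.sum_neg_distrib, Real.exp_sum,
    ENNReal.ofReal_prod_of_nonneg fun _ _ => (Real.exp_pos _).le]
  simp only [ENNReal.ofReal_mul zero_le_two, ENNReal.ofReal_ofNat, Finset.prod_mul_distrib,
    Finset.prod_const, Finset.card_univ, Fintype.card_fin]

theorem MeasureTheory.Measure.measure_preimage_eq_of_map_eq_map {α β γ : Type*}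
    [MeasurableSpace α] [MeasurableSpace β] [MeasurableSpace γ] {μ : Measure α} {ν : Measure β}
    [NeZero ν] {f : α → γ} {g : β → γ} (hfg : μ.map f = ν.map g) (hg : Measurable g)
    {s : Set γ} (hs : MeasurableSet s) : μ (f ⁻¹' s) = ν (g ⁻¹' s) := by
  have hf : AEMeasurable f μ :=
    .of_map_ne_zero (hfg ▸ (map_ne_zero_iff hg.aemeasurable).2 (NeZero.ne ν))
  rw [← map_apply_of_aemeasurable hf hs, hfg, map_apply hg hs]

namespace EuclideanSpace

variable {ι : Type*} [Fintype ι]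

theorem volume_preimage_ofLp_pi_Icc (m : ι → ℝ) :
    volume (WithLp.ofLp ⁻¹' Set.univ.pi fun j => Set.Icc (-m j) (m j) : Set (EuclideanSpace ℝ ι))
      = ∏ j, ENNReal.ofReal (2 * m j) := by
  rw [(PiLp.volume_preserving_ofLp ι).measure_preimage
    (MeasurableSet.univ_pi fun _ => measurableSet_Icc).nullMeasurableSet, volume_pi_pi]
  simp only [Real.volume_Icc, sub_neg_eq_add, two_mul]

theorem toSphere_le_of_abs_apply_le {s : Set (sphere (0 : EuclideanSpace ℝ ι) 1)}
    (hs : MeasurableSet s) {m : ι → ℝ} (hm : ∀ x ∈ s, ∀ j, |(x : EuclideanSpace ℝ ι) j| ≤ m j) :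
    (volume : Measure (EuclideanSpace ℝ ι)).toSphere s
      ≤ Fintype.card ι * ∏ j, ENNReal.ofReal (2 * m j) := by
  rw [Measure.toSphere_apply' _ hs, finrank_euclideanSpace, ← volume_preimage_ofLp_pi_Icc]
  gcongr
  rintro _ ⟨r, hr, _, ⟨x, hx, rfl⟩, rfl⟩ j -
  rw [Set.mem_Icc, ← abs_le]
  calc |r * (x : EuclideanSpace ℝ ι) j| ≤ 1 * |(x : EuclideanSpace ℝ ι) j| := by
        rw [abs_mul, abs_of_pos hr.1]; gcongr; exact hr.2.le
    _ ≤ m j := by rw [one_mul]; exact hm x hx j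

end EuclideanSpace

/-- let `D = diag(e^{a_1}, …, e^{a_ℓ})` with `a_1 ≥ ⋯ ≥ a_ℓ`, `u` a fixed unit
vector, and `U` a random matrix in `SO(ℓ)` such that `Uu` is uniformly distributed on the
unit sphere. Then for `a_1 ≥ a ≥ a_ℓ`,
`P{‖DUu‖_∞ ≤ e^a} ≤ C_ℓ exp(−∑_{j=1}^ℓ (a_j − a)_+)` with `C_ℓ` depending only on `ℓ`. -/
theorem stmt10 (ℓ : ℕ) (hℓ : 0 < ℓ) :
    ∃ C : ℝ, 0 < C ∧
    ∀ (Ω : Type) (_ : MeasurableSpace Ω) (P : Measure Ω), IsProbabilityMeasure P →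
    ∀ (U : Ω → Matrix (Fin ℓ) (Fin ℓ) ℝ) (u : Fin ℓ → ℝ) (aa : ℕ → ℝ) (a : ℝ),
      (∀ i j, 1 ≤ i → i ≤ j → j ≤ ℓ → aa j ≤ aa i) →
      a ≤ aa 1 → aa ℓ ≤ a →
      (∀ ω, U ω ∈ Matrix.orthogonalGroup (Fin ℓ) ℝ ∧ (U ω).det = 1) →
      (∑ i, u i ^ 2 = 1) →
      (Measure.map (fun ω => (U ω).mulVec u) P
        = Measure.map
            (fun x : sphere (0 : EuclideanSpace ℝ (Fin ℓ)) 1 =>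
              (WithLp.equiv 2 (Fin ℓ → ℝ)) (x : EuclideanSpace ℝ (Fin ℓ)))
            ((((volume : Measure (EuclideanSpace ℝ (Fin ℓ))).toSphere Set.univ)⁻¹ •
              (volume : Measure (EuclideanSpace ℝ (Fin ℓ))).toSphere))) →
      P {ω | ∀ j : Fin ℓ, |Real.exp (aa ((j : ℕ) + 1)) * (U ω).mulVec u j| ≤ Real.exp a}
        ≤ ENNReal.ofReal (C * Real.exp (-(∑ j ∈ Finset.Icc 1 ℓ, max (aa j - a) 0))) := by
  set σ := (volume : Measure (EuclideanSpace ℝ (Fin ℓ))).toSphere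
  have : Nonempty (Fin ℓ) := ⟨⟨0, hℓ⟩⟩
  have : Nonempty (sphere (0 : EuclideanSpace ℝ (Fin ℓ)) 1) :=
    (NormedSpace.sphere_nonempty.2 zero_le_one).to_subtype
  set K : ENNReal := ℓ * 2 ^ ℓ / σ Set.univ
  have hK : K ≠ ⊤ := ENNReal.div_ne_top (by simp [ENNReal.mul_eq_top]) (NeZero.ne _)
  refine ⟨K.toReal, ENNReal.toReal_pos (by simp [K, hℓ.ne']) hK, ?_⟩
  intro Ω _ P _ U u aa a _ _ _ _ _ hmap
  set T : Set (Fin ℓ → ℝ) :=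
    {v | ∀ j : Fin ℓ, |Real.exp (aa ((j : ℕ) + 1)) * v j| ≤ Real.exp a}
  have hT : MeasurableSet T := by
    simp only [T, Set.ofPred_forall]
    exact .iInter fun j => measurableSet_le (by fun_prop) measurable_const
  have hg : Measurable fun x : sphere (0 : EuclideanSpace ℝ (Fin ℓ)) 1 =>
      (WithLp.equiv 2 (Fin ℓ → ℝ)) (x : EuclideanSpace ℝ (Fin ℓ)) :=
    (PiLp.volume_preserving_ofLp (Fin ℓ)).measurable.comp measurable_subtype_coe
  calc P ((fun ω => (U ω).mulVec u) ⁻¹' T)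
        = (σ Set.univ)⁻¹ * σ ((fun x : sphere (0 : EuclideanSpace ℝ (Fin ℓ)) 1 =>
            (WithLp.equiv 2 (Fin ℓ → ℝ)) (x : EuclideanSpace ℝ (Fin ℓ))) ⁻¹' T) :=
        Measure.measure_preimage_eq_of_map_eq_map hmap hg hT
    _ ≤ (σ Set.univ)⁻¹ *
          (ℓ * ∏ j : Fin ℓ, ENNReal.ofReal (2 * Real.exp (-max (aa (j + 1) - a) 0))) := by
        gcongr
        simpa using EuclideanSpace.toSphere_le_of_abs_apply_le (hg hT) fun x hx j =>
          Real.abs_le_exp_neg_max_sub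
            ((PiLp.norm_apply_le _ j).trans (norm_eq_of_mem_sphere x).le) (hx j)
    _ = ENNReal.ofReal (K.toReal * Real.exp (-(∑ j ∈ Finset.Icc 1 ℓ, max (aa j - a) 0))) := by
        rw [ENNReal.prod_ofReal_two_mul_exp_neg (fun j => max (aa j - a) 0),
          ENNReal.ofReal_mul ENNReal.toReal_nonneg, ENNReal.ofReal_toReal hK]
        simp only [K, div_eq_mul_inv]
        ring
end

section
/- Let M, M′ be d×d real matrices with singular values s_1(M) > s_2(M) and corresponding top right singular vectors u_1(M), u_1(M′) (unit eigenvectors of MᵀM, resp. M′ᵀM′, for the top eigenvalue). If ‖M − M′‖ ≤ δ and s_1(M) − s_2(M) ≥ g > 0 with δ ≤ g/4, then, for a suitable choice of signs, ‖u_1(M) − u_1(M′)‖ ≤ C·δ/g for an absolute constant C. -/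
/-!
Let `T, T'` be the operators of `M, M'`, `v₀ = u₁(M)`, `v' = u₁(M')` and `τ = s₁(M')`. Since
`T'†T' v' = τ² v'`, the vector `v'` is an approximate eigenvector of `T†T`: the residual
`(T†T - τ²) v' = (T†T - T'†T') v'` has norm at most `δ (‖T‖ + ‖T'‖) ≤ (9/4) δ s₁`. As
`τ ≥ s₁ - δ`, the value `τ²` stays at distance at least `(9/16) g s₁` from the other eigenvalues
`sᵢ² ≤ s₂²` of `T†T`, so expanding `v'` in the eigenbasis of `T†T` gives
`sin² ∠(v₀, v') ≤ 16 δ² / g²`. Finally `min ‖v₀ ∓ v'‖² = 2 - 2 |cos| ≤ 2 sin²`.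
-/

open Matrix
open scoped RealInnerProductSpace

theorem norm_star_mul_self_sub_star_mul_self_le {R : Type*} [NonUnitalNormedRing R] [StarRing R]
    [NormedStarGroup R] (a b : R) :
    ‖star a * a - star b * b‖ ≤ ‖a - b‖ * (‖a‖ + ‖b‖) := by
  have h : star a * a - star b * b = star a * (a - b) + star (a - b) * b := by
    simp only [star_sub, mul_sub, sub_mul]; abel
  calc ‖star a * a - star b * b‖ ≤ ‖star a‖ * ‖a - b‖ + ‖star (a - b)‖ * ‖b‖ :=
        h ▸ norm_add_le_of_le (norm_mul_le _ _) (norm_mul_le _ _)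
    _ = ‖a - b‖ * (‖a‖ + ‖b‖) := by rw [norm_star, norm_star]; ring

section InnerProductSpace

variable {E : Type*} [NormedAddCommGroup E] [InnerProductSpace ℝ E]

theorem norm_sub_sq_le_or_norm_add_sq_le {u v : E} (hu : ‖u‖ = 1) (hv : ‖v‖ = 1) :
    ‖u - v‖ ^ 2 ≤ 2 * (1 - ⟪u, v⟫ ^ 2) ∨ ‖u + v‖ ^ 2 ≤ 2 * (1 - ⟪u, v⟫ ^ 2) := by
  have hc := abs_le.mp (abs_real_inner_le_norm u v)
  rw [hu, hv, one_mul] at hc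
  rw [norm_sub_sq_real, norm_add_sq_real, hu, hv]
  rcases le_total 0 ⟪u, v⟫ with h | h
  · left; nlinarith
  · right; nlinarith

theorem OrthonormalBasis.sq_mul_norm_sq_sub_inner_sq_le {ι : Type*} [Fintype ι]
    (b : OrthonormalBasis ι ℝ E) {A : E →ₗ[ℝ] E} (hA : A.IsSymmetric) {μ : ι → ℝ}
    (hb : ∀ i, A (b i) = μ i • b i) {i₀ : ι} {ν D : ℝ} (hD : 0 ≤ D)
    (hgap : ∀ i ≠ i₀, D ≤ |μ i - ν|) (x : E) :
    D ^ 2 * (‖x‖ ^ 2 - ⟪b i₀, x⟫ ^ 2) ≤ ‖A x - ν • x‖ ^ 2 := by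
  classical
  have hcoord : ∀ i, ⟪b i, A x - ν • x⟫ = (μ i - ν) * ⟪b i, x⟫ := fun i => by
    rw [inner_sub_right, real_inner_smul_right, ← hA, hb, real_inner_smul_left]; ring
  rw [← b.sum_sq_inner_right x, ← b.sum_sq_inner_right (A x - ν • x),
    ← Finset.add_sum_erase _ _ (Finset.mem_univ i₀), add_sub_cancel_left, Finset.mul_sum]
  calc ∑ i ∈ Finset.univ.erase i₀, D ^ 2 * ⟪b i, x⟫ ^ 2
      ≤ ∑ i ∈ Finset.univ.erase i₀, ⟪b i, A x - ν • x⟫ ^ 2 :=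
        Finset.sum_le_sum fun i hi => by
          rw [hcoord, mul_pow, ← sq_abs (μ i - ν)]
          gcongr
          exact hgap i (Finset.ne_of_mem_erase hi)
    _ ≤ ∑ i, ⟪b i, A x - ν • x⟫ ^ 2 :=
        Finset.sum_le_sum_of_subset_of_nonneg (Finset.erase_subset _ _)
          fun i _ _ => sq_nonneg _

theorem ContinuousLinearMap.norm_apply_eq_of_star_mul_self_apply [CompleteSpace E]
    {T : E →L[ℝ] E} {x : E} {σ : ℝ} (hσ : 0 ≤ σ) (hx : (star T * T) x = σ ^ 2 • x) :
    ‖T x‖ = σ * ‖x‖ := by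
  have h := T.apply_norm_sq_eq_inner_adjoint_left x
  rw [← star_eq_adjoint, ← mul_def, hx, real_inner_smul_left, real_inner_self_eq_norm_sq,
    RCLike.re_to_real, ← mul_pow] at h
  exact (pow_left_inj₀ (norm_nonneg _) (by positivity) two_ne_zero).mp h

theorem OrthonormalBasis.wedin_sin_sq_le [CompleteSpace E] {ι : Type*} [Fintype ι]
    (b : OrthonormalBasis ι ℝ E) {T T' : E →L[ℝ] E} {σ : ι → ℝ} {i₀ : ι} {v : E}
    {σ₁ τ δ g : ℝ} (hb : ∀ i, (star T * T) (b i) = σ i ^ 2 • b i) (hT : ‖T‖ ≤ σ i₀)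
    (hσ : ∀ i ≠ i₀, |σ i| ≤ σ₁) (hσ₁ : 0 ≤ σ₁) (hgap : g ≤ σ i₀ - σ₁) (hg : 0 < g)
    (hv : (star T' * T') v = τ ^ 2 • v) (hT' : ‖T'‖ ≤ τ)
    (hδ : ‖T - T'‖ ≤ δ) (hδg : δ ≤ g / 4) :
    g ^ 2 * (‖v‖ ^ 2 - ⟪b i₀, v⟫ ^ 2) ≤ 16 * δ ^ 2 * ‖v‖ ^ 2 := by
  set σ₀ := σ i₀
  have hσ₀ : 0 < σ₀ := by linarith
  have hδ₀ : 0 ≤ δ := (norm_nonneg _).trans hδ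
  have hτ : σ₀ - δ ≤ τ := by
    have hTb : ‖T (b i₀)‖ = σ₀ := by
      rw [T.norm_apply_eq_of_star_mul_self_apply hσ₀.le (hb i₀), b.norm_eq_one, mul_one]
    have hb₀ : ‖b i₀‖ ≤ 1 := (b.norm_eq_one i₀).le
    have hTT' := (T - T').unit_le_opNorm _ hb₀
    have hT'b := T'.unit_le_opNorm _ hb₀
    have := norm_sub_norm_le (T (b i₀)) (T' (b i₀))
    rw [← _root_.sub_apply] at this
    linarith
  have hres : ‖(star T * T) v - τ ^ 2 • v‖ ≤ 9 / 4 * (δ * σ₀) * ‖v‖ := by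
    rw [← hv, ← _root_.sub_apply]
    refine (star T * T - star T' * T').le_of_opNorm_le ?_ v
    have hT'le : ‖T'‖ ≤ σ₀ + δ := by
      have := norm_le_norm_add_norm_sub' T' T
      rw [norm_sub_rev] at this; linarith
    calc ‖star T * T - star T' * T'‖ ≤ ‖T - T'‖ * (‖T‖ + ‖T'‖) :=
          norm_star_mul_self_sub_star_mul_self_le T T'
      _ ≤ δ * (σ₀ + (σ₀ + δ)) := by gcongr
      _ ≤ 9 / 4 * (δ * σ₀) := by nlinarith
  -- `τ² - σᵢ² ≥ (σ₀ - δ)² - (σ₀ - g)² = (g - δ) (2σ₀ - g - δ) ≥ (3g/4) (3σ₀/4)`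
  have hsep : ∀ i ≠ i₀, 9 / 16 * (g * σ₀) ≤ |σ i ^ 2 - τ ^ 2| := by
    intro i hi
    have hσi := sq_le_sq' (abs_le.mp (hσ i hi)).1 (abs_le.mp (hσ i hi)).2
    rw [abs_sub_comm]
    refine le_trans ?_ (le_abs_self _)
    nlinarith
  have hsin := b.sq_mul_norm_sq_sub_inner_sq_le (IsSelfAdjoint.star_mul_self T).isSymmetric hb
    (by positivity) hsep v
  have key : (9 / 16 * σ₀) ^ 2 * (g ^ 2 * (‖v‖ ^ 2 - ⟪b i₀, v⟫ ^ 2))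
      ≤ (9 / 16 * σ₀) ^ 2 * (16 * δ ^ 2 * ‖v‖ ^ 2) :=
    calc _ = (9 / 16 * (g * σ₀)) ^ 2 * (‖v‖ ^ 2 - ⟪b i₀, v⟫ ^ 2) := by ring
      _ ≤ ‖(star T * T) v - τ ^ 2 • v‖ ^ 2 := hsin
      _ ≤ (9 / 4 * (δ * σ₀) * ‖v‖) ^ 2 := by gcongr
      _ = _ := by ring
  exact le_of_mul_le_mul_left key (by positivity)

end InnerProductSpace

namespace Matrix

variable {n : Type*} [Fintype n] [DecidableEq n]

theorem toEuclideanCLM_mem_unitary {V : Matrix n n ℝ} (hV : V ∈ orthogonalGroup n ℝ) :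
    toEuclideanCLM (𝕜 := ℝ) V ∈ unitary (EuclideanSpace ℝ n →L[ℝ] EuclideanSpace ℝ n) :=
  Unitary.map_mem _ hV

noncomputable def colOrthonormalBasis {V : Matrix n n ℝ} (hV : V ∈ orthogonalGroup n ℝ) :
    OrthonormalBasis n ℝ (EuclideanSpace ℝ n) :=
  (EuclideanSpace.basisFun n ℝ).map
    (Unitary.linearIsometryEquiv ⟨_, toEuclideanCLM_mem_unitary hV⟩)

theorem colOrthonormalBasis_apply {V : Matrix n n ℝ} (hV : V ∈ orthogonalGroup n ℝ) (i : n) :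
    colOrthonormalBasis hV i = WithLp.toLp 2 (V.col i) := by
  rw [colOrthonormalBasis, OrthonormalBasis.map_apply, EuclideanSpace.basisFun_apply]
  change toEuclideanCLM (𝕜 := ℝ) V (WithLp.toLp 2 (Pi.single i 1)) = _
  rw [toEuclideanCLM_toLp, mulVec_single_one]

open scoped Matrix.Norms.L2Operator in
theorem norm_toEuclideanCLM_diagonal (s : n → ℝ) :
    ‖toEuclideanCLM (𝕜 := ℝ) (diagonal s)‖ = ‖s‖ := by
  rw [l2_opNorm_toEuclideanCLM, l2_opNorm_diagonal]

theorem norm_toEuclideanCLM_svd {U V : Matrix n n ℝ} (hU : U ∈ orthogonalGroup n ℝ)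
    (hV : V ∈ orthogonalGroup n ℝ) (s : n → ℝ) :
    ‖toEuclideanCLM (𝕜 := ℝ) (U * diagonal s * Vᵀ)‖ = ‖s‖ := by
  have hVt : Vᵀ ∈ orthogonalGroup n ℝ := transpose_mem_unitaryGroup_iff.mpr hV
  have hUu := toEuclideanCLM_mem_unitary hU
  have hVtu := toEuclideanCLM_mem_unitary hVt
  rw [map_mul, map_mul, CStarRing.norm_mul_mem_unitary _ hVtu,
    CStarRing.norm_mem_unitary_mul _ hUu, norm_toEuclideanCLM_diagonal]

theorem transpose_svd_mul_self {U V : Matrix n n ℝ} (hU : U ∈ orthogonalGroup n ℝ) (s : n → ℝ) :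
    (U * diagonal s * Vᵀ)ᵀ * (U * diagonal s * Vᵀ) = V * diagonal (s ^ 2) * Vᵀ := by
  have hU' : Uᵀ * U = 1 := by simpa using (mem_orthogonalGroup_iff' n ℝ).mp hU
  simp only [transpose_mul, transpose_transpose, diagonal_transpose, Matrix.mul_assoc]
  rw [← Matrix.mul_assoc Uᵀ, hU', Matrix.one_mul, ← Matrix.mul_assoc (diagonal s),
    diagonal_mul_diagonal, sq]
  rfl

theorem star_toEuclideanCLM_svd_mul_self_apply {U V : Matrix n n ℝ}
    (hU : U ∈ orthogonalGroup n ℝ) (hV : V ∈ orthogonalGroup n ℝ) (s : n → ℝ) (i : n) :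
    (star (toEuclideanCLM (𝕜 := ℝ) (U * diagonal s * Vᵀ)) *
        toEuclideanCLM (𝕜 := ℝ) (U * diagonal s * Vᵀ)) (colOrthonormalBasis hV i) =
      s i ^ 2 • colOrthonormalBasis hV i := by
  have hV' : Vᵀ * V = 1 := by simpa using (mem_orthogonalGroup_iff' n ℝ).mp hV
  rw [colOrthonormalBasis_apply, ← map_star, ← map_mul, toEuclideanCLM_toLp, ← WithLp.toLp_smul,
    star_eq_conjTranspose, conjTranspose_eq_transpose_of_trivial, transpose_svd_mul_self hU,
    ← mulVec_single_one, mulVec_mulVec, Matrix.mul_assoc, Matrix.mul_assoc, hV', Matrix.mul_one,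
    ← mulVec_mulVec, diagonal_mulVec_single, mul_one, ← mulVec_smul, ← Pi.single_smul',
    smul_eq_mul, mul_one, Pi.pow_apply]

end Matrix

/-- Wedin's bound for the top singular vector: there is an absolute constant
`C` such that if `M, M'` have singular value decompositions with top right singular vectors
`u_1(M), u_1(M')` (first columns of `V`, `V'`), `‖M − M'‖ ≤ δ`, and the spectral gap
satisfies `s_1(M) − s_2(M) ≥ g > 0` with `δ ≤ g/4`, then for a suitable choice of signs
`‖u_1(M) ∓ u_1(M')‖ ≤ C δ / g`. -/
theorem stmt17 :
    ∃ C : ℝ, 0 < C ∧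
    ∀ (d : ℕ) (hd : 2 ≤ d)
      (M M' : Matrix (Fin d) (Fin d) ℝ)
      (s s' : Fin d → ℝ) (U V U' V' : Matrix (Fin d) (Fin d) ℝ)
      (δ g : ℝ),
      Antitone s → (∀ j, 0 ≤ s j) → Antitone s' → (∀ j, 0 ≤ s' j) →
      U ∈ Matrix.orthogonalGroup (Fin d) ℝ → V ∈ Matrix.orthogonalGroup (Fin d) ℝ →
      U' ∈ Matrix.orthogonalGroup (Fin d) ℝ → V' ∈ Matrix.orthogonalGroup (Fin d) ℝ →
      M = U * Matrix.diagonal s * Vᵀ → M' = U' * Matrix.diagonal s' * V'ᵀ →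
      ‖Matrix.toEuclideanCLM (𝕜 := ℝ) (M - M')‖ ≤ δ →
      0 < g → g ≤ s ⟨0, by omega⟩ - s ⟨1, by omega⟩ → δ ≤ g / 4 →
      (Real.sqrt (∑ i, (V i ⟨0, by omega⟩ - V' i ⟨0, by omega⟩) ^ 2) ≤ C * δ / g ∨
       Real.sqrt (∑ i, (V i ⟨0, by omega⟩ + V' i ⟨0, by omega⟩) ^ 2) ≤ C * δ / g) := by
  refine ⟨6, by norm_num, ?_⟩
  intro d hd M M' s s' U V U' V' δ g hs hs₀ hs' hs'₀ hU hV hU' hV' rfl rfl hδ hg hgap hδg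
  set i₀ : Fin d := ⟨0, by omega⟩
  set i₁ : Fin d := ⟨1, by omega⟩
  have hnorm_le : ∀ {t : Fin d → ℝ}, Antitone t → (∀ j, 0 ≤ t j) → ‖t‖ ≤ t i₀ := fun ht ht₀ =>
    (pi_norm_le_iff_of_nonneg (ht₀ i₀)).mpr fun j =>
      (Real.norm_of_nonneg (ht₀ j)).trans_le (ht (Nat.zero_le j))
  have hi₁ : ∀ i ≠ i₀, i₁ ≤ i := fun i hi => by
    rw [Ne, Fin.ext_iff] at hi
    exact Nat.one_le_iff_ne_zero.mpr hi
  have hδ₀ : 0 ≤ δ := (norm_nonneg _).trans hδ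
  set b := colOrthonormalBasis hV
  set b' := colOrthonormalBasis hV'
  have hsin := b.wedin_sin_sq_le (star_toEuclideanCLM_svd_mul_self_apply hU hV s)
    ((norm_toEuclideanCLM_svd hU hV s).trans_le (hnorm_le hs hs₀))
    (fun i hi => (abs_of_nonneg (hs₀ i)).trans_le (hs (hi₁ i hi)))
    (hs₀ i₁) hgap hg (star_toEuclideanCLM_svd_mul_self_apply hU' hV' s' i₀)
    ((norm_toEuclideanCLM_svd hU' hV' s').trans_le (hnorm_le hs' hs'₀)) (by rwa [← map_sub]) hδg
  rw [b'.norm_eq_one, one_pow, mul_one] at hsin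
  have hbound : 2 * (1 - ⟪b i₀, b' i₀⟫ ^ 2) ≤ (6 * δ / g) ^ 2 := by
    rw [div_pow, le_div_iff₀ (by positivity)]
    nlinarith
  have hsqrt : ∀ x : EuclideanSpace ℝ (Fin d), ‖x‖ ^ 2 ≤ (6 * δ / g) ^ 2 →
      √(∑ i, x i ^ 2) ≤ 6 * δ / g := fun x hx => by
    rw [← EuclideanSpace.real_norm_sq_eq, Real.sqrt_sq (norm_nonneg x)]
    exact le_of_pow_le_pow_left₀ two_ne_zero (by positivity) hx
  refine (norm_sub_sq_le_or_norm_add_sq_le (b.norm_eq_one i₀) (b'.norm_eq_one i₀)).imp ?_ ?_ <;>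
    intro h <;> simpa [b, b', colOrthonormalBasis_apply] using hsqrt _ (h.trans hbound)
end
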